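/- (Operator Equivalence Theorem, integral form.) Let n ≥ 1, μ ∈ ℝⁿ, Σ a symmetric positive definite real n×n matrix, and let p : ℝⁿ → ℝ be the associated Gaussian density. Let h : ℝⁿ → ℝⁿ be continuously differentiable and M : ℝⁿ → ℝ^{n×n} twice continuously differentiable with M(x) symmetric for every x. Then for every twice continuously differentiable Ψ : ℝⁿ → ℝ with compact support, ∫_{ℝⁿ} [ Σᵢ hᵢ(x) ∂Ψ/∂xᵢ(x) + (1/2) Σᵢⱼ Mᵢⱼ(x) ∂²Ψ/∂xᵢ∂xⱼ(x) ] p(x) dx = ∫_{ℝⁿ} Ψ(x) · c(x) · p(x) dx, where c is the 𝒴-coefficient c(x) = (Σ⁻¹(x − μ))ᵀ h(x) − Σᵢ ∂hᵢ/∂xᵢ(x) + (1/2) Σᵢⱼ [ (−Σ⁻¹ + Σ⁻¹ (x − μ)(x − μ)ᵀ (Σ⁻¹)ᵀ)ᵢⱼ · Mᵢⱼ(x) + ∂²Mᵢⱼ/∂xᵢ∂xⱼ(x) ] − Σᵢⱼ ∂Mᵢⱼ/∂xᵢ(x) · (Σ⁻¹(x − μ))ⱼ. -/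

import Mathlib

/-!
Integrating by parts once in the drift term and twice in the diffusion term moves every
derivative off the compactly supported `Ψ`, so `∫ (AΨ) p = ∫ Ψ (A* p)` with the Fokker–Planck
operator `A* p = ½ ∑ᵢⱼ ∂ⱼ∂ᵢ(Mᵢⱼ p) - ∑ᵢ ∂ᵢ(hᵢ p)`. For the Gaussian density
`∂ᵢ p = -(Σ⁻¹(x - μ))ᵢ p`, so `A* p` is `p` times an explicit coefficient; symmetry of `M`
merges the two mixed first-order terms and the two orders of differentiation in `∂ⱼ∂ᵢ Mᵢⱼ`,
which turns that coefficient into `c`.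
-/

open Matrix MeasureTheory

/-- Partial derivative of `f : ℝⁿ → ℝ` in the `i`-th coordinate direction. -/
noncomputable def pd {n : ℕ} (i : Fin n) (f : (Fin n → ℝ) → ℝ) (x : Fin n → ℝ) : ℝ :=
  fderiv ℝ f x (Pi.single i 1)

/-- Gaussian density with mean `μ` and covariance matrix `S`. -/
noncomputable def gaussianPdf {n : ℕ} (μ : Fin n → ℝ) (S : Matrix (Fin n) (Fin n) ℝ)
    (x : Fin n → ℝ) : ℝ :=
  (2 * Real.pi) ^ (-(n : ℝ) / 2) * S.det ^ (-(1 : ℝ) / 2) *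
    Real.exp (-(1 / 2) * ((x - μ) ⬝ᵥ S⁻¹.mulVec (x - μ)))

/-- The scalar `𝒴`-coefficient built from drift `h`, diffusion matrix `M`, and the
Gaussian parameters `μ`, `S`. -/
noncomputable def yCoeff {n : ℕ} (μ : Fin n → ℝ) (S : Matrix (Fin n) (Fin n) ℝ)
    (h : (Fin n → ℝ) → Fin n → ℝ) (M : (Fin n → ℝ) → Matrix (Fin n) (Fin n) ℝ)
    (x : Fin n → ℝ) : ℝ :=
  (S⁻¹.mulVec (x - μ)) ⬝ᵥ h x - (∑ i, pd i (fun y => h y i) x)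
    + (1 / 2) * ∑ i, ∑ j,
        ((-S⁻¹ + S⁻¹ * vecMulVec (x - μ) (x - μ) * (S⁻¹)ᵀ) i j * M x i j
          + pd i (fun y => pd j (fun z => M z i j) y) x)
    - ∑ i, ∑ j, pd i (fun y => M y i j) x * (S⁻¹.mulVec (x - μ)) j

open Finset

theorem Matrix.mul_vecMulVec_mul_transpose {R l m p q : Type*} [CommSemiring R] [Fintype m]
    [Fintype p] (A : Matrix l m R) (B : Matrix q p R) (v : m → R) (w : p → R) :
    A * vecMulVec v w * Bᵀ = vecMulVec (A *ᵥ v) (B *ᵥ w) := by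
  rw [mul_vecMulVec, vecMulVec_mul, vecMul_transpose]

variable {n : ℕ}

section PartialDerivative

variable {f g : (Fin n → ℝ) → ℝ} {x : Fin n → ℝ} (i : Fin n)

theorem pd_eq_of_hasFDerivAt {L : (Fin n → ℝ) →L[ℝ] ℝ} (hf : HasFDerivAt f L x) :
    pd i f x = L (Pi.single i 1) := by
  rw [pd, hf.fderiv]

theorem pd_sub (hf : DifferentiableAt ℝ f x) (hg : DifferentiableAt ℝ g x) :
    pd i (fun y => f y - g y) x = pd i f x - pd i g x := by
  simp [pd, fderiv_fun_sub hf hg]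

theorem pd_mul (hf : DifferentiableAt ℝ f x) (hg : DifferentiableAt ℝ g x) :
    pd i (fun y => f y * g y) x = pd i f x * g x + f x * pd i g x := by
  simp [pd, fderiv_fun_mul hf hg]
  ring

theorem pd_const_mul (c : ℝ) (hf : DifferentiableAt ℝ f x) :
    pd i (fun y => c * f y) x = c * pd i f x := by
  simp [pd, fderiv_const_mul hf]

theorem pd_sum {ι : Type*} (s : Finset ι) {F : ι → (Fin n → ℝ) → ℝ}
    (hF : ∀ k ∈ s, DifferentiableAt ℝ (F k) x) :
    pd i (fun y => ∑ k ∈ s, F k y) x = ∑ k ∈ s, pd i (F k) x := by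
  simp [pd, fderiv_fun_sum hF]

theorem pd_exp (hf : DifferentiableAt ℝ f x) :
    pd i (fun y => Real.exp (f y)) x = Real.exp (f x) * pd i f x := by
  simp [pd, fderiv_exp hf]

theorem differentiable_apply_sub_const (k : Fin n) (c : ℝ) :
    Differentiable ℝ fun y : Fin n → ℝ => y k - c := by
  fun_prop

theorem pd_apply_sub_const (k : Fin n) (c : ℝ) :
    pd i (fun y => y k - c) x = (Pi.single i 1 : Fin n → ℝ) k :=
  pd_eq_of_hasFDerivAt i ((hasFDerivAt_apply k x).sub_const c)

theorem contDiff_pd {m k : WithTop ℕ∞} (hf : ContDiff ℝ m f) (hk : k + 1 ≤ m) :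
    ContDiff ℝ k (pd i f) :=
  (ContinuousLinearMap.apply ℝ ℝ (Pi.single i 1 : Fin n → ℝ)).contDiff.comp (hf.fderiv_right hk)

theorem continuous_pd (hf : ContDiff ℝ 1 f) : Continuous (pd i f) :=
  (contDiff_pd i hf (by norm_num) : ContDiff ℝ 0 _).continuous

theorem HasCompactSupport.pd (hf : HasCompactSupport f) : HasCompactSupport (pd i f) :=
  (hf.fderiv ℝ).comp_left (g := fun L : (Fin n → ℝ) →L[ℝ] ℝ => L (Pi.single i 1)) rfl

end PartialDerivative

section IntegrationByParts

variable {w u : (Fin n → ℝ) → ℝ}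

theorem integrable_mul_of_hasCompactSupport_left {E : Type*} [TopologicalSpace E]
    [MeasurableSpace E] [OpensMeasurableSpace E] {ν : Measure E} [IsFiniteMeasureOnCompacts ν]
    {f g : E → ℝ} (hf : Continuous f) (hfc : HasCompactSupport f) (hg : Continuous g) :
    Integrable (fun x => f x * g x) ν :=
  (hf.mul hg).integrable_of_hasCompactSupport hfc.mul_right

theorem integral_pd_mul_eq_neg (i : Fin n) (hw : ContDiff ℝ 1 w) (hwc : HasCompactSupport w)
    (hu : ContDiff ℝ 1 u) :
    ∫ x, pd i w x * u x = -∫ x, w x * pd i u x := by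
  have hw' := hw.differentiable one_ne_zero
  have hu' := hu.differentiable one_ne_zero
  refine neg_eq_iff_eq_neg.mp (integral_mul_fderiv_eq_neg_fderiv_mul_of_integrable
    (integrable_mul_of_hasCompactSupport_left (continuous_pd i hw) (hwc.pd i) hu.continuous)
    (integrable_mul_of_hasCompactSupport_left hw.continuous hwc (continuous_pd i hu))
    (integrable_mul_of_hasCompactSupport_left hw.continuous hwc hu.continuous)
    (fun x _ => hw' x) (fun x _ => hu' x)).symm

theorem integral_pd_pd_mul (i j : Fin n) (hw : ContDiff ℝ 2 w) (hwc : HasCompactSupport w)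
    (hu : ContDiff ℝ 2 u) :
    ∫ x, pd i (pd j w) x * u x = ∫ x, w x * pd j (pd i u) x := by
  rw [integral_pd_mul_eq_neg i (contDiff_pd j hw (by norm_num)) (hwc.pd j) (hu.of_le one_le_two),
    integral_pd_mul_eq_neg j (hw.of_le one_le_two) hwc (contDiff_pd i hu (by norm_num)), neg_neg]

theorem integral_sum_add_mul_sum_sum {α ι : Type*} [MeasurableSpace α] {ν : Measure α}
    [Fintype ι] {f : ι → α → ℝ} {g : ι → ι → α → ℝ} (hf : ∀ i, Integrable (f i) ν)
    (hg : ∀ i j, Integrable (g i j) ν) (c : ℝ) :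
    ∫ x, (∑ i, f i x + c * ∑ i, ∑ j, g i j x) ∂ν
      = (∑ i, ∫ x, f i x ∂ν) + c * ∑ i, ∑ j, ∫ x, g i j x ∂ν := by
  have hg' : ∀ i, Integrable (fun x => ∑ j, g i j x) ν :=
    fun i => integrable_finsetSum _ fun j _ => hg i j
  rw [integral_add (integrable_finsetSum _ fun i _ => hf i)
      ((integrable_finsetSum _ fun i _ => hg' i).const_mul c),
    integral_const_mul, integral_finsetSum _ fun i _ => hf i,
    integral_finsetSum _ fun i _ => hg' i]
  simp only [integral_finsetSum _ fun j _ => hg _ j]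

end IntegrationByParts

section Generator

variable (h : (Fin n → ℝ) → Fin n → ℝ) (M : (Fin n → ℝ) → Matrix (Fin n) (Fin n) ℝ)

noncomputable def generator (Ψ : (Fin n → ℝ) → ℝ) (x : Fin n → ℝ) : ℝ :=
  (∑ i, h x i * pd i Ψ x) + (1 / 2) * ∑ i, ∑ j, M x i j * pd i (pd j Ψ) x

noncomputable def fokkerPlanck (u : (Fin n → ℝ) → ℝ) (x : Fin n → ℝ) : ℝ :=
  (1 / 2) * ∑ i, ∑ j, pd j (pd i fun y => M y i j * u y) x - ∑ i, pd i (fun y => h y i * u y) x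

variable {h M} {Ψ u : (Fin n → ℝ) → ℝ}

theorem integral_generator_mul (hh : ∀ i, ContDiff ℝ 1 fun y => h y i)
    (hM : ∀ i j, ContDiff ℝ 2 fun y => M y i j) (hΨ : ContDiff ℝ 2 Ψ)
    (hΨc : HasCompactSupport Ψ) (hu : ContDiff ℝ 2 u) :
    ∫ x, generator h M Ψ x * u x = ∫ x, Ψ x * fokkerPlanck h M u x := by
  have hΨ1 : ContDiff ℝ 1 Ψ := hΨ.of_le one_le_two
  have hhu : ∀ i, ContDiff ℝ 1 fun y => h y i * u y := fun i => (hh i).mul (hu.of_le one_le_two)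
  have hMu : ∀ i j, ContDiff ℝ 2 fun y => M y i j * u y := fun i j => (hM i j).mul hu
  calc ∫ x, generator h M Ψ x * u x
      = ∫ x, ((∑ i, pd i Ψ x * (h x i * u x))
          + 1 / 2 * ∑ i, ∑ j, pd i (pd j Ψ) x * (M x i j * u x)) := by
        congr 1; ext x
        simp only [generator, add_mul, sum_mul, mul_assoc]
        congr 1
        · exact sum_congr rfl fun i _ => by ring
        · congr 1
          exact sum_congr rfl fun i _ => sum_congr rfl fun j _ => by ring
    _ = (∑ i, ∫ x, pd i Ψ x * (h x i * u x))
          + 1 / 2 * ∑ i, ∑ j, ∫ x, pd i (pd j Ψ) x * (M x i j * u x) :=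
        integral_sum_add_mul_sum_sum
          (fun i => integrable_mul_of_hasCompactSupport_left (continuous_pd i hΨ1) (hΨc.pd i)
            (hhu i).continuous)
          (fun i j => integrable_mul_of_hasCompactSupport_left
            (continuous_pd i (contDiff_pd j hΨ (by norm_num))) ((hΨc.pd j).pd i)
            (hMu i j).continuous) _
    _ = (∑ i, ∫ x, -(Ψ x * pd i (fun y => h y i * u y) x))
          + 1 / 2 * ∑ i, ∑ j, ∫ x, Ψ x * pd j (pd i fun y => M y i j * u y) x := by
        simp only [integral_neg, integral_pd_mul_eq_neg _ hΨ1 hΨc (hhu _),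
          integral_pd_pd_mul _ _ hΨ hΨc (hMu _ _)]
    _ = ∫ x, ((∑ i, -(Ψ x * pd i (fun y => h y i * u y) x))
          + 1 / 2 * ∑ i, ∑ j, Ψ x * pd j (pd i fun y => M y i j * u y) x) :=
        (integral_sum_add_mul_sum_sum
          (fun i => (integrable_mul_of_hasCompactSupport_left hΨ.continuous hΨc
            (continuous_pd i (hhu i))).neg)
          (fun i j => integrable_mul_of_hasCompactSupport_left hΨ.continuous hΨc
            (continuous_pd j (contDiff_pd i (hMu i j) (by norm_num)))) _).symm
    _ = ∫ x, Ψ x * fokkerPlanck h M u x := by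
        congr 1; ext x
        simp only [fokkerPlanck, mul_sub, mul_sum, sum_neg_distrib,
          mul_left_comm (Ψ x)]
        ring

end Generator

section Gaussian

variable {μ : Fin n → ℝ} {S : Matrix (Fin n) (Fin n) ℝ} {x : Fin n → ℝ} (i : Fin n)

theorem contDiff_mulVec_sub_apply (A : Matrix (Fin n) (Fin n) ℝ) (k : Fin n) {m : WithTop ℕ∞} :
    ContDiff ℝ m fun y : Fin n → ℝ => (A *ᵥ (y - μ)) k := by
  simp only [mulVec, dotProduct]
  fun_prop

theorem contDiff_quadForm (A : Matrix (Fin n) (Fin n) ℝ) {m : WithTop ℕ∞} :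
    ContDiff ℝ m fun y : Fin n → ℝ => (y - μ) ⬝ᵥ A *ᵥ (y - μ) := by
  simp only [mulVec, dotProduct]
  fun_prop

theorem contDiff_gaussianPdf {m : WithTop ℕ∞} : ContDiff ℝ m (gaussianPdf μ S) :=
  contDiff_const.mul (Real.contDiff_exp.comp (contDiff_const.mul (contDiff_quadForm S⁻¹)))

theorem pd_mulVec_sub_apply (A : Matrix (Fin n) (Fin n) ℝ) (k : Fin n) :
    pd i (fun y => (A *ᵥ (y - μ)) k) x = A k i := by
  change pd i (fun y => ∑ l, A k l * (y l - μ l)) x = _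
  rw [pd_sum i univ (F := fun l y => A k l * (y l - μ l))
    fun l _ => (differentiable_apply_sub_const l (μ l) x).const_mul _]
  simp [pd_const_mul i _ (differentiable_apply_sub_const _ _ x), pd_apply_sub_const,
    Pi.single_apply]

theorem pd_quadForm (A : Matrix (Fin n) (Fin n) ℝ) :
    pd i (fun y => (y - μ) ⬝ᵥ A *ᵥ (y - μ)) x = (A *ᵥ (x - μ)) i + ((x - μ) ᵥ* A) i := by
  have hA : ∀ k, Differentiable ℝ fun y : Fin n → ℝ => (A *ᵥ (y - μ)) k :=
    fun k => (contDiff_mulVec_sub_apply A k).differentiable one_ne_zero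
  change pd i (fun y => ∑ k, (y k - μ k) * (A *ᵥ (y - μ)) k) x = _
  rw [pd_sum i univ (F := fun k y => (y k - μ k) * (A *ᵥ (y - μ)) k)
    fun k _ => (differentiable_apply_sub_const k (μ k) x).mul (hA k x)]
  simp [pd_mul i (differentiable_apply_sub_const _ _ x) (hA _ x), pd_apply_sub_const,
    pd_mulVec_sub_apply, Pi.single_apply, sum_add_distrib, vecMul, dotProduct]

theorem pd_gaussianPdf (hS : S.IsSymm) :
    pd i (gaussianPdf μ S) x = -(S⁻¹ *ᵥ (x - μ)) i * gaussianPdf μ S x := by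
  have hq : Differentiable ℝ fun y : Fin n → ℝ => -(1 / 2) * ((y - μ) ⬝ᵥ S⁻¹ *ᵥ (y - μ)) :=
    (contDiff_const.mul (contDiff_quadForm S⁻¹)).differentiable one_ne_zero
  have hvecMul : (x - μ) ᵥ* S⁻¹ = S⁻¹ *ᵥ (x - μ) := by
    rw [← vecMul_transpose, hS.inv.eq]
  unfold gaussianPdf
  rw [pd_const_mul i _ (hq x).exp, pd_exp i (hq x),
    pd_const_mul i _ ((contDiff_quadForm (m := 1) S⁻¹).differentiable one_ne_zero x), pd_quadForm,
    hvecMul]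
  ring

theorem pd_mul_gaussianPdf (hS : S.IsSymm) {f : (Fin n → ℝ) → ℝ} (hf : Differentiable ℝ f) :
    pd i (fun y => f y * gaussianPdf μ S y)
      = fun y => (pd i f y - f y * (S⁻¹ *ᵥ (y - μ)) i) * gaussianPdf μ S y := by
  ext y
  rw [pd_mul i (hf y) (contDiff_gaussianPdf.differentiable one_ne_zero y), pd_gaussianPdf i hS]
  ring

theorem pd_pd_mul_gaussianPdf (hS : S.IsSymm) {f : (Fin n → ℝ) → ℝ} (hf : ContDiff ℝ 2 f)
    (j : Fin n) :
    pd j (pd i fun y => f y * gaussianPdf μ S y) x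
      = (pd j (pd i f) x - pd j f x * (S⁻¹ *ᵥ (x - μ)) i - pd i f x * (S⁻¹ *ᵥ (x - μ)) j
          - S⁻¹ i j * f x + (S⁻¹ *ᵥ (x - μ)) i * (S⁻¹ *ᵥ (x - μ)) j * f x)
        * gaussianPdf μ S x := by
  have hf' : Differentiable ℝ f := hf.differentiable two_ne_zero
  have hpdf : Differentiable ℝ (pd i f) :=
    (contDiff_pd i hf (by norm_num) : ContDiff ℝ 1 _).differentiable one_ne_zero
  have hs : Differentiable ℝ fun y => (S⁻¹ *ᵥ (y - μ)) i :=
    (contDiff_mulVec_sub_apply S⁻¹ i).differentiable one_ne_zero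
  rw [pd_mul_gaussianPdf i hS hf', pd_mul_gaussianPdf j hS
      (f := fun y => pd i f y - f y * (S⁻¹ *ᵥ (y - μ)) i) (hpdf.sub (hf'.mul hs))]
  beta_reduce
  rw [pd_sub j (g := fun y => f y * (S⁻¹ *ᵥ (y - μ)) i) (hpdf x) ((hf'.mul hs) x),
    pd_mul j (hf' x) (hs x), pd_mulVec_sub_apply]
  ring

end Gaussian

section Coefficient

variable {μ : Fin n → ℝ} {S : Matrix (Fin n) (Fin n) ℝ} {h : (Fin n → ℝ) → Fin n → ℝ}
  {M : (Fin n → ℝ) → Matrix (Fin n) (Fin n) ℝ}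

theorem sum_sum_swap_of_isSymm (hM : ∀ x, (M x).IsSymm)
    (G : Fin n → Fin n → ((Fin n → ℝ) → ℝ) → ℝ) :
    ∑ i, ∑ j, G i j (fun y => M y i j) = ∑ i, ∑ j, G j i (fun y => M y i j) := by
  rw [sum_comm]
  refine sum_congr rfl fun i _ => sum_congr rfl fun j _ => ?_
  congr 1
  ext y
  exact (hM y).apply i j

theorem yCoeff_eq_of_isSymm (hM : ∀ x, (M x).IsSymm) (x : Fin n → ℝ) :
    yCoeff μ S h M x
      = 1 / 2 * ∑ i, ∑ j, (pd j (pd i fun y => M y i j) x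
          - pd j (fun y => M y i j) x * (S⁻¹ *ᵥ (x - μ)) i
          - pd i (fun y => M y i j) x * (S⁻¹ *ᵥ (x - μ)) j
          - S⁻¹ i j * M x i j + (S⁻¹ *ᵥ (x - μ)) i * (S⁻¹ *ᵥ (x - μ)) j * M x i j)
        - ∑ i, (pd i (fun y => h y i) x - h x i * (S⁻¹ *ᵥ (x - μ)) i) := by
  have hpdpd := sum_sum_swap_of_isSymm hM fun i j φ => pd i (fun y => pd j φ y) x
  have hpd := sum_sum_swap_of_isSymm hM fun i j φ => pd i φ x * (S⁻¹ *ᵥ (x - μ)) j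
  rw [yCoeff, Matrix.mul_vecMulVec_mul_transpose, dotProduct_comm]
  simp only [dotProduct, Matrix.add_apply, Matrix.neg_apply, vecMulVec_apply, add_mul, neg_mul,
    sum_add_distrib, sum_sub_distrib, sum_neg_distrib] at hpdpd hpd ⊢
  linarith

theorem fokkerPlanck_gaussianPdf (hS : S.IsSymm) (hh : ∀ i, ContDiff ℝ 1 fun y => h y i)
    (hM : ∀ i j, ContDiff ℝ 2 fun y => M y i j) (hMsymm : ∀ x, (M x).IsSymm) (x : Fin n → ℝ) :
    fokkerPlanck h M (gaussianPdf μ S) x = yCoeff μ S h M x * gaussianPdf μ S x := by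
  simp only [fokkerPlanck, pd_pd_mul_gaussianPdf _ hS (hM _ _),
    pd_mul_gaussianPdf _ hS ((hh _).differentiable one_ne_zero), yCoeff_eq_of_isSymm hMsymm,
    ← sum_mul]
  ring

end Coefficient

theorem operator_equivalence_integral_general (n : ℕ) (μ : Fin n → ℝ)
    (S : Matrix (Fin n) (Fin n) ℝ) (hSsymm : S.IsSymm)
    (h : (Fin n → ℝ) → Fin n → ℝ) (hh : ∀ i, ContDiff ℝ 1 fun y => h y i)
    (M : (Fin n → ℝ) → Matrix (Fin n) (Fin n) ℝ)
    (hM : ∀ i j, ContDiff ℝ 2 fun y => M y i j)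
    (hMsymm : ∀ x, (M x).IsSymm)
    (Ψ : (Fin n → ℝ) → ℝ) (hΨ : ContDiff ℝ 2 Ψ) (hΨc : HasCompactSupport Ψ) :
    ∫ x : Fin n → ℝ,
        ((∑ i, h x i * pd i Ψ x)
          + (1 / 2) * ∑ i, ∑ j, M x i j * pd i (fun y => pd j Ψ y) x)
          * gaussianPdf μ S x
    = ∫ x : Fin n → ℝ, Ψ x * yCoeff μ S h M x * gaussianPdf μ S x := by
  simp only [mul_assoc (Ψ _), ← fokkerPlanck_gaussianPdf hSsymm hh hM hMsymm]
  exact integral_generator_mul hh hM hΨ hΨc contDiff_gaussianPdf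

/-- Operator Equivalence Theorem, integral form: `⟨AΨ, p⟩ = ⟨𝒴Ψ, p⟩` for the Gaussian
density `p` and every compactly supported `C²` test function `Ψ`. -/
theorem operator_equivalence_integral (n : ℕ) (hn : 1 ≤ n) (μ : Fin n → ℝ)
    (S : Matrix (Fin n) (Fin n) ℝ) (hS : S.PosDef) (hSsymm : S.IsSymm)
    (h : (Fin n → ℝ) → Fin n → ℝ) (hh : ∀ i, ContDiff ℝ 1 fun y => h y i)
    (M : (Fin n → ℝ) → Matrix (Fin n) (Fin n) ℝ)
    (hM : ∀ i j, ContDiff ℝ 2 fun y => M y i j)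
    (hMsymm : ∀ x, (M x).IsSymm)
    (Ψ : (Fin n → ℝ) → ℝ) (hΨ : ContDiff ℝ 2 Ψ) (hΨc : HasCompactSupport Ψ) :
    ∫ x : Fin n → ℝ,
        ((∑ i, h x i * pd i Ψ x)
          + (1 / 2) * ∑ i, ∑ j, M x i j * pd i (fun y => pd j Ψ y) x)
          * gaussianPdf μ S x
    = ∫ x : Fin n → ℝ, Ψ x * yCoeff μ S h M x * gaussianPdf μ S x :=
  operator_equivalence_integral_general n μ S hSsymm h hh M hM hMsymm Ψ hΨ hΨc
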